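/- Let q ≥ 2, let r and t be positive integers coprime to q with r dividing t, let H = ⟨τ^r, σ^α⟩ and S = ⟨τ^t, σ^m τ^s⟩ be subgroups of BS(1,q) with S ⊆ H and 0 ≤ s ≤ t−1. Then τ^r (σ^m τ^s) τ^(−r) ∈ S if and only if t/r divides 1 − q^m. -/

import Mathlib

/-- The single relator `σ τ σ⁻¹ (τ^q)⁻¹` defining the Baumslag–Solitar group
`BS(1,q) = ⟨σ, τ ∣ σ τ σ⁻¹ = τ^q⟩`, with `σ` the generator `true` and `τ` the
generator `false` of the free group on `Bool`. -/
def bsRel (q : ℤ) : Set (FreeGroup Bool) :=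
  {FreeGroup.of true * FreeGroup.of false * (FreeGroup.of true)⁻¹ * (FreeGroup.of false ^ q)⁻¹}

/-- The Baumslag–Solitar group `BS(1,q)`. -/
abbrev BS (q : ℤ) := PresentedGroup (bsRel q)

/-- The generator `σ` of `BS(1,q)`. -/
def BS.σ (q : ℤ) : BS q := PresentedGroup.of true

/-- The generator `τ` of `BS(1,q)`. -/
def BS.τ (q : ℤ) : BS q := PresentedGroup.of false

/-!
Moving `τ^r` past `σ^m` gives `τ^r (σ^m τ^s) τ^(-r) = τ^(r (1 - q^m)) σ^m τ^s`, so the question is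
which powers `τ^d` lie in `S = ⟨τ^t, σ^m τ^s⟩`. Those with `t ∣ d` clearly do. Conversely, as `q` is
a unit modulo `t`, `BS(1,q)` maps to the affine group `ℤ/t ⋊ ℤ` (`σ` acting by multiplication by
`q`, `τ` as translation by `1`). There `τ^t` becomes trivial, so `S` lands in the cyclic group
generated by the image of `σ^m τ^s`; for `m ≠ 0` only its trivial power has `ℤ`-component `0`,
so `τ^d ∈ S` forces `d ≡ 0 mod t`.
-/

open Multiplicative SemidirectProduct

def affineAction {R : Type*} [CommRing R] (u : Rˣ) :
    Multiplicative ℤ →* MulAut (Multiplicative R) where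
  toFun k := AddEquiv.toMultiplicative (DistribMulAction.toAddAut Rˣ R (u ^ k.toAdd))
  map_one' := by ext; simp
  map_mul' _ _ := by ext; simp [zpow_add, mul_smul]

@[simp] theorem affineAction_apply {R : Type*} [CommRing R] (u : Rˣ) (k : ℤ) (b : R) :
    affineAction u (ofAdd k) (ofAdd b) = ofAdd (((u ^ k : Rˣ) : R) * b) :=
  rfl

namespace BS

variable {q : ℤ}

theorem σ_mul_τ_mul_σ_inv : σ q * τ q * (σ q)⁻¹ = τ q ^ q := by
  have h : PresentedGroup.mk (bsRel q)
      (FreeGroup.of true * FreeGroup.of false * (FreeGroup.of true)⁻¹ *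
        (FreeGroup.of false ^ q)⁻¹) = 1 :=
    (QuotientGroup.eq_one_iff _).mpr (Subgroup.subset_normalClosure rfl)
  simp only [map_mul, map_inv, map_zpow, mul_inv_eq_one] at h
  exact h

theorem σ_mul_τ_zpow (a : ℤ) : σ q * τ q ^ a = τ q ^ (q * a) * σ q := by
  rw [zpow_mul, ← σ_mul_τ_mul_σ_inv, conj_zpow, inv_mul_cancel_right]

theorem σ_pow_mul_τ_zpow (m : ℕ) (a : ℤ) : σ q ^ m * τ q ^ a = τ q ^ (q ^ m * a) * σ q ^ m := by
  induction m generalizing a with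
  | zero => simp
  | succ n ih =>
    rw [pow_succ', mul_assoc, ih, ← mul_assoc, σ_mul_τ_zpow, mul_assoc, pow_succ' q, mul_assoc]

theorem τ_zpow_conj_σ_pow_mul_τ_zpow (r s : ℤ) (m : ℕ) :
    τ q ^ r * (σ q ^ m * τ q ^ s) * τ q ^ (-r) =
      τ q ^ (r * (1 - q ^ m)) * (σ q ^ m * τ q ^ s) := by
  rw [mul_assoc, mul_assoc, ← zpow_add, σ_pow_mul_τ_zpow, σ_pow_mul_τ_zpow, ← mul_assoc,
    ← mul_assoc, ← zpow_add, ← zpow_add]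
  ring_nf

section Affine

variable {R : Type*} [CommRing R]

def toAffine (u : Rˣ) (hu : (u : R) = q) :
    BS q →* Multiplicative R ⋊[affineAction u] Multiplicative ℤ :=
  PresentedGroup.toGroup (f := fun b => if b then inr (ofAdd 1) else inl (ofAdd 1)) <| by
    rintro _ rfl
    simp only [map_mul, map_inv, map_zpow, FreeGroup.lift_apply_of, if_true, Bool.false_eq_true,
      if_false]
    rw [← map_inv, ← inl_aut, ← map_zpow, mul_inv_eq_one, inl_inj, affineAction_apply,
      ← ofAdd_zsmul]
    simp [hu]

theorem toAffine_τ_zpow (u : Rˣ) (hu : (u : R) = q) (a : ℤ) :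
    toAffine u hu (τ q ^ a) = inl (ofAdd (a : R)) := by
  rw [map_zpow, τ, toAffine, PresentedGroup.toGroup.of, if_neg Bool.false_ne_true, ← map_zpow,
    ← ofAdd_zsmul, zsmul_one]

theorem toAffine_σ_pow (u : Rˣ) (hu : (u : R) = q) (m : ℕ) :
    toAffine u hu (σ q ^ m) = inr (ofAdd (m : ℤ)) := by
  rw [map_pow, σ, toAffine, PresentedGroup.toGroup.of, if_pos rfl, ← map_pow, ← ofAdd_nsmul,
    nsmul_one]

theorem intCast_eq_zero_of_τ_zpow_mem_closure (u : Rˣ) (hu : (u : R) = q) {t s d : ℤ} {m : ℕ}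
    (hm : m ≠ 0) (ht : (t : R) = 0)
    (hd : τ q ^ d ∈ Subgroup.closure {τ q ^ t, σ q ^ m * τ q ^ s}) : (d : R) = 0 := by
  have hS : Subgroup.closure {τ q ^ t, σ q ^ m * τ q ^ s} ≤
      (Subgroup.zpowers (toAffine u hu (σ q ^ m * τ q ^ s))).comap (toAffine u hu) := by
    rw [Subgroup.closure_le, Set.insert_subset_iff, Set.singleton_subset_iff]
    refine ⟨?_, Subgroup.mem_zpowers _⟩
    rw [SetLike.mem_coe, Subgroup.mem_comap, toAffine_τ_zpow, ht, ofAdd_zero, map_one]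
    exact one_mem _
  obtain ⟨k, hk⟩ := hS hd
  dsimp only at hk
  have hk0 : k = 0 := by
    have h := congrArg rightHom hk
    rw [map_zpow, map_mul, map_mul, toAffine_σ_pow, toAffine_τ_zpow, toAffine_τ_zpow, rightHom_inr,
      rightHom_inl, rightHom_inl, mul_one, ← ofAdd_zsmul, ofAdd_eq_one, smul_eq_mul,
      mul_eq_zero] at h
    exact h.resolve_right (Int.natCast_ne_zero.mpr hm)
  rwa [hk0, zpow_zero, toAffine_τ_zpow, eq_comm, ← map_one inl, inl_inj, ← ofAdd_zero,
    ofAdd.injective.eq_iff] at hk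

end Affine

theorem dvd_of_τ_zpow_mem_closure {t s d : ℤ} {m : ℕ} (hm : m ≠ 0) (htq : IsCoprime t q)
    (hd : τ q ^ d ∈ Subgroup.closure {τ q ^ t, σ q ^ m * τ q ^ s}) : t ∣ d := by
  have hqt : IsCoprime q (t.natAbs : ℤ) := by
    rw [Int.natCast_natAbs]
    exact htq.symm.abs_right
  rw [← Int.natAbs_dvd, ← ZMod.intCast_zmod_eq_zero_iff_dvd]
  refine intCast_eq_zero_of_τ_zpow_mem_closure (ZMod.unitOfIsCoprime q hqt) rfl hm ?_ hd
  rw [ZMod.intCast_zmod_eq_zero_iff_dvd, Int.natAbs_dvd]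

theorem τ_zpow_mem_closure_iff {t s d : ℤ} {m : ℕ} (hm : m ≠ 0) (htq : IsCoprime t q) :
    τ q ^ d ∈ Subgroup.closure {τ q ^ t, σ q ^ m * τ q ^ s} ↔ t ∣ d := by
  refine ⟨dvd_of_τ_zpow_mem_closure hm htq, ?_⟩
  rintro ⟨c, rfl⟩
  rw [zpow_mul]
  exact zpow_mem (Subgroup.subset_closure (Set.mem_insert _ _)) c

end BS

theorem bs_tau_conj_mem_iff_general (q : ℤ) (r t s : ℤ) (m : ℕ)
    (hr : 0 < r) (htq : IsCoprime t q)
    (hrt : r ∣ t) :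
    BS.τ q ^ r * (BS.σ q ^ m * BS.τ q ^ s) * BS.τ q ^ (-r) ∈
        Subgroup.closure {BS.τ q ^ t, BS.σ q ^ m * BS.τ q ^ s} ↔
      (t / r) ∣ (1 - q ^ m) := by
  have hv : BS.σ q ^ m * BS.τ q ^ s ∈ Subgroup.closure {BS.τ q ^ t, BS.σ q ^ m * BS.τ q ^ s} :=
    Subgroup.subset_closure (Set.mem_insert_of_mem _ rfl)
  rw [BS.τ_zpow_conj_σ_pow_mul_τ_zpow, mul_mem_cancel_right hv,
    Int.div_dvd_iff_dvd_mul hrt hr.ne']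
  rcases eq_or_ne m 0 with rfl | hm
  · simp
  · exact BS.τ_zpow_mem_closure_iff hm htq

/-- Lemma A.2(1): with `H = ⟨τ^r, σ^α⟩` and `S = ⟨τ^t, σ^m τ^s⟩ ⊆ H`, `r, t`
positive and coprime to `q`, `r ∣ t`, `0 ≤ s ≤ t - 1`, we have
`τ^r (σ^m τ^s) τ^(-r) ∈ S` if and only if `t/r` divides `1 - q^m`. -/
theorem bs_tau_conj_mem_iff (q : ℤ) (hq : 2 ≤ q) (r t s : ℤ) (m α : ℕ)
    (hr : 0 < r) (ht : 0 < t) (hrq : IsCoprime r q) (htq : IsCoprime t q)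
    (hrt : r ∣ t) (hs : 0 ≤ s) (hst : s ≤ t - 1)
    (hSH : (Subgroup.closure {BS.τ q ^ t, BS.σ q ^ m * BS.τ q ^ s} : Subgroup (BS q)) ≤
      Subgroup.closure {BS.τ q ^ r, BS.σ q ^ α}) :
    BS.τ q ^ r * (BS.σ q ^ m * BS.τ q ^ s) * BS.τ q ^ (-r) ∈
        Subgroup.closure {BS.τ q ^ t, BS.σ q ^ m * BS.τ q ^ s} ↔
      (t / r) ∣ (1 - q ^ m) :=
  bs_tau_conj_mem_iff_general q r t s m hr htq hrt
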